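/- With sin_q(z) = sum_{n≥0} (-1)^n q^(n^2) z^(2n+1)/[2n+1]_q! and cos_q(z) = sum_{n≥0} (-1)^n q^(n^2) z^(2n)/[2n]_q! over Q(q), for n ≥ 1 the coefficient of z^(2n) in cos_q(z)·cos_{1/q}(z) equals (-1)^n q^(n(n-1)/2)/[2n]_q! · (prod_{i=1}^{n-1}(1+q^i)^2) · (1+q^n), and this equals the negative of the coefficient of z^(2n) in sin_q(z)·sin_{1/q}(z). -/

import Mathlib

noncomputable section
open Finset PowerSeries

abbrev Fq : Type := RatFunc ℚ

/-- The variable `q` as element of the field of rational functions `ℚ(q)`. -/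
def qv : Fq := RatFunc.X

/-- The q-integer `[m]_q = 1 + q + ... + q^(m-1)`. -/
def qInt (x : Fq) (m : ℕ) : Fq := ∑ i ∈ Finset.range m, x ^ i

/-- The q-factorial `[m]_q! = [1]_q [2]_q ⋯ [m]_q`. -/
def qFact (x : Fq) (m : ℕ) : Fq := ∏ i ∈ Finset.range m, qInt x (i + 1)

/-- `sin_q(z) = ∑ (-1)^n q^(n^2) z^(2n+1)/[2n+1]_q!`. -/
def qsin (x : Fq) : PowerSeries Fq :=
  PowerSeries.mk fun m =>
    if m % 2 = 1 then (-1 : Fq) ^ (m / 2) * x ^ ((m / 2) ^ 2) / qFact x m else 0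

/-- `cos_q(z) = ∑ (-1)^n q^(n^2) z^(2n)/[2n]_q!`. -/
def qcos (x : Fq) : PowerSeries Fq :=
  PowerSeries.mk fun m =>
    if m % 2 = 0 then (-1 : Fq) ^ (m / 2) * x ^ ((m / 2) ^ 2) / qFact x m else 0

/-!
Write the coefficient of `z^(2n)` in `cos_q(z) cos_{1/q}(z)` as a sum over the degree `m` of the
`cos_q` factor, and the one in `sin_q(z) sin_{1/q}(z)` as a sum over the degree `m` of the
`sin_{1/q}` factor; only even, resp. odd, `m` contribute. Since `[m]_{1/q}! = q^(-C(m,2)) [m]_q!`,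
each summand is, up to the common factor `(-1)^n q^(n(n-1)) / [2n]_q!` and a sign `-1` for odd
`m`, the `m`-th term of the q-binomial expansion
`∏_{i<2n} (1 + q^i t) = ∑_m [2n choose m]_q q^C(m,2) t^m` at `t = q^(1-n)`.
Hence `cos·cos ± sin·sin` is the common factor times this product at `t = ∓q^(1-n)`. At
`t = -q^(1-n)` the factor `i = n - 1` vanishes; at `t = q^(1-n)` the product is
`2 q^(-n(n-1)/2) ∏_{i=1}^{n-1} (1 + q^i)^2 (1 + q^n)`.
-/

lemma qInt_add (x : Fq) (a b : ℕ) : qInt x (a + b) = qInt x a + x ^ a * qInt x b := by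
  simp only [qInt, sum_range_add, mul_sum, pow_add]

lemma qFact_succ (x : Fq) (m : ℕ) : qFact x (m + 1) = qFact x m * qInt x (m + 1) :=
  prod_range_succ _ _

lemma qInt_inv_mul_pow {x : Fq} (hx : x ≠ 0) (m : ℕ) :
    qInt x⁻¹ (m + 1) * x ^ m = qInt x (m + 1) := by
  rw [qInt, qInt, sum_mul, ← sum_range_reflect]
  refine sum_congr rfl fun i hi => ?_
  rw [mem_range] at hi
  rw [inv_pow, ← div_eq_inv_mul, div_eq_iff (pow_ne_zero _ hx), ← pow_add]
  congr 1
  omega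

lemma qFact_inv_mul_pow {x : Fq} (hx : x ≠ 0) (m : ℕ) :
    qFact x⁻¹ m * x ^ m.choose 2 = qFact x m := by
  induction m with
  | zero => simp [qFact]
  | succ m ih =>
    rw [qFact_succ, qFact_succ, Nat.choose_succ_succ', Nat.choose_one_right, pow_add, ← ih,
      ← qInt_inv_mul_pow hx]
    ring

lemma qFact_ne_zero {x : Fq} (hx : Transcendental ℚ x) (m : ℕ) : qFact x m ≠ 0 := by
  refine prod_ne_zero_iff.2 fun i _ hi => hx.pow i.succ_pos ?_
  have hgeom : qInt x (i + 1) * (x - 1) = x ^ (i + 1) - 1 := geom_sum_mul x (i + 1)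
  rw [hi, zero_mul, eq_comm, sub_eq_zero] at hgeom
  rw [hgeom]
  exact isAlgebraic_one

def qBinom (x : Fq) : ℕ → ℕ → Fq
  | _, 0 => 1
  | 0, _ + 1 => 0
  | N + 1, m + 1 => qBinom x N m + x ^ (m + 1) * qBinom x N (m + 1)

@[simp]
lemma qBinom_zero_right (x : Fq) (N : ℕ) : qBinom x N 0 = 1 := by
  cases N <;> rfl

lemma qBinom_succ_succ (x : Fq) (N m : ℕ) :
    qBinom x (N + 1) (m + 1) = qBinom x N m + x ^ (m + 1) * qBinom x N (m + 1) :=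
  rfl

lemma qBinom_eq_zero_of_lt (x : Fq) {N m : ℕ} (h : N < m) : qBinom x N m = 0 := by
  induction N generalizing m with
  | zero => obtain ⟨m, rfl⟩ := Nat.exists_eq_succ_of_ne_zero h.ne'; rfl
  | succ N ih =>
    obtain ⟨m, rfl⟩ := Nat.exists_eq_succ_of_ne_zero (by omega : m ≠ 0)
    rw [qBinom_succ_succ, ih (by omega), ih (by omega), mul_zero, add_zero]

lemma qBinom_self (x : Fq) (N : ℕ) : qBinom x N N = 1 := by
  induction N with
  | zero => rfl
  | succ N ih =>
    rw [qBinom_succ_succ, ih, qBinom_eq_zero_of_lt x N.lt_succ_self, mul_zero, add_zero]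

lemma qBinom_add_mul_qFact_mul_qFact (x : Fq) (a b : ℕ) :
    qBinom x (a + b) a * qFact x a * qFact x b = qFact x (a + b) := by
  induction b generalizing a with
  | zero => simp [qBinom_self, qFact]
  | succ b ihb =>
    induction a with
    | zero => simp [qFact]
    | succ a iha =>
      have hsplit := qInt_add x (a + 1) (b + 1)
      have ihb' := ihb (a + 1)
      rw [show a + (b + 1) = a + 1 + b by omega, qFact_succ _ b] at iha
      rw [qFact_succ _ a] at ihb'
      rw [show a + 1 + (b + 1) = a + 1 + b + 1 by omega] at hsplit ⊢
      rw [qBinom_succ_succ, show a + 1 + b = a + (b + 1) by omega, qFact_succ _ (a + (b + 1)),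
        qFact_succ _ a, qFact_succ _ b]
      rw [show a + (b + 1) = a + 1 + b by omega]
      linear_combination qInt x (a + 1) * iha + x ^ (a + 1) * qInt x (b + 1) * ihb' -
        qFact x (a + 1 + b) * hsplit

theorem prod_one_add_pow_mul_eq_sum_qBinom (x : Fq) (N : ℕ) (t : Fq) :
    ∏ i ∈ range N, (1 + x ^ i * t) =
      ∑ m ∈ range (N + 1), qBinom x N m * x ^ m.choose 2 * t ^ m := by
  induction N generalizing t with
  | zero => simp
  | succ N ih =>
    have hshift :
        ∏ i ∈ range N, (1 + x ^ (i + 1) * t) = ∏ i ∈ range N, (1 + x ^ i * (x * t)) := by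
      simp only [pow_succ, mul_assoc]
    have hlast : ∑ m ∈ range (N + 1), qBinom x N m * x ^ m.choose 2 * (x * t) ^ m =
        ∑ m ∈ range (N + 1 + 1), qBinom x N m * x ^ m.choose 2 * (x * t) ^ m := by
      rw [sum_range_succ _ (N + 1), qBinom_eq_zero_of_lt x N.lt_succ_self, zero_mul, zero_mul,
        add_zero]
    have hstep (k : ℕ) : qBinom x (N + 1) (k + 1) * x ^ (k + 1).choose 2 * t ^ (k + 1) =
        qBinom x N (k + 1) * x ^ (k + 1).choose 2 * (x * t) ^ (k + 1) +
          qBinom x N k * x ^ k.choose 2 * (x * t) ^ k * t := by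
      rw [qBinom_succ_succ, Nat.choose_succ_succ', Nat.choose_one_right]
      ring
    rw [prod_range_succ', hshift, ih, sum_range_succ' _ (N + 1), sum_congr rfl fun k _ => hstep k,
      sum_add_distrib, ← sum_mul]
    rw [sum_range_succ' _ (N + 1)] at hlast
    simp only [qBinom_zero_right, Nat.choose_zero_succ, pow_zero, mul_one, one_mul] at hlast ⊢
    linear_combination hlast

lemma coeff_qcos_two_mul (x : Fq) (k : ℕ) :
    coeff (2 * k) (qcos x) = (-1) ^ k * x ^ (k ^ 2) / qFact x (2 * k) := by
  simp [qcos, coeff_mk]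

lemma coeff_qcos_two_mul_add_one (x : Fq) (k : ℕ) : coeff (2 * k + 1) (qcos x) = 0 := by
  simp [qcos, coeff_mk]

lemma coeff_qsin_two_mul (x : Fq) (k : ℕ) : coeff (2 * k) (qsin x) = 0 := by
  simp [qsin, coeff_mk]

lemma coeff_qsin_two_mul_add_one (x : Fq) (k : ℕ) :
    coeff (2 * k + 1) (qsin x) = (-1) ^ k * x ^ (k ^ 2) / qFact x (2 * k + 1) := by
  simp [qsin, coeff_mk, Nat.add_div]

lemma coeff_qcos_mul_coeff_qcos_inv {x : Fq} (hx : x ≠ 0) {p k j : ℕ} (hkj : k + j = p + 1)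
    (hN : qFact x (2 * (p + 1)) ≠ 0) :
    coeff (2 * k) (qcos x) * coeff (2 * j) (qcos x⁻¹) =
      (-1) ^ (p + 1) * x ^ ((p + 1) * p) / qFact x (2 * (p + 1)) *
        (qBinom x (2 * (p + 1)) (2 * k) * x ^ (2 * k).choose 2 * ((x ^ p)⁻¹) ^ (2 * k)) := by
  have hfact := qBinom_add_mul_qFact_mul_qFact x (2 * k) (2 * j)
  rw [show 2 * k + 2 * j = 2 * (p + 1) by omega] at hfact
  have hinv := qFact_inv_mul_pow hx (2 * j)
  have hexp : x ^ (k ^ 2) * x ^ (2 * j).choose 2 * (x ^ p) ^ (2 * k) =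
      x ^ ((p + 1) * p) * x ^ (2 * k).choose 2 * x ^ (j ^ 2) := by
    simp only [← pow_mul, ← pow_add]
    congr 1
    qify [Nat.cast_choose_two]
    linear_combination ((j : ℚ) + p - k) * (by exact_mod_cast hkj : (k : ℚ) + j = p + 1)
  rw [← hfact] at hN ⊢
  have hsign : (-1 : Fq) ^ (p + 1) = (-1) ^ k * (-1) ^ j := by rw [← pow_add, hkj]
  rw [coeff_qcos_two_mul, coeff_qcos_two_mul, hsign, ← hinv]
  simp only [inv_pow]
  obtain ⟨⟨hbinom, hk⟩, hj⟩ := by simpa only [mul_ne_zero_iff] using hN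
  have hj' : qFact x⁻¹ (2 * j) ≠ 0 := left_ne_zero_of_mul (hinv ▸ hj)
  generalize qFact x⁻¹ (2 * j) = A at hj' ⊢
  field_simp
  linear_combination hexp

lemma coeff_qsin_inv_mul_coeff_qsin {x : Fq} (hx : x ≠ 0) {p k j : ℕ} (hkj : k + j = p)
    (hN : qFact x (2 * (p + 1)) ≠ 0) :
    coeff (2 * k + 1) (qsin x⁻¹) * coeff (2 * j + 1) (qsin x) =
      -((-1) ^ (p + 1) * x ^ ((p + 1) * p) / qFact x (2 * (p + 1)) *
        (qBinom x (2 * (p + 1)) (2 * k + 1) * x ^ (2 * k + 1).choose 2 *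
          ((x ^ p)⁻¹) ^ (2 * k + 1))) := by
  subst hkj
  have hfact := qBinom_add_mul_qFact_mul_qFact x (2 * k + 1) (2 * j + 1)
  rw [show 2 * k + 1 + (2 * j + 1) = 2 * (k + j + 1) by ring] at hfact
  have hinv := qFact_inv_mul_pow hx (2 * k + 1)
  have hexp :
      x ^ (j ^ 2) * (x ^ (k + j)) ^ (2 * k + 1) = x ^ ((k + j + 1) * (k + j)) * x ^ (k ^ 2) := by
    simp only [← pow_mul, ← pow_add]
    ring_nf
  rw [← hfact] at hN ⊢
  have hsign : (-1 : Fq) ^ (k + j + 1) = -((-1) ^ k * (-1) ^ j) := by rw [pow_succ, pow_add]; ring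
  rw [coeff_qsin_two_mul_add_one, coeff_qsin_two_mul_add_one, hsign, ← hinv]
  simp only [inv_pow]
  obtain ⟨⟨hbinom, hk⟩, hj⟩ := by simpa only [mul_ne_zero_iff] using hN
  have hk' : qFact x⁻¹ (2 * k + 1) ≠ 0 := left_ne_zero_of_mul (hinv ▸ hk)
  generalize qFact x⁻¹ (2 * k + 1) = A at hk' ⊢
  field_simp
  linear_combination hexp

lemma coeff_qcos_mul_add_coeff_qsin_inv_mul {x : Fq} (hx : x ≠ 0) {p m : ℕ}
    (hm : m ≤ 2 * (p + 1)) (hN : qFact x (2 * (p + 1)) ≠ 0) {s : Fq} (hs : s ^ 2 = 1) :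
    coeff m (qcos x) * coeff (2 * (p + 1) - m) (qcos x⁻¹) +
        s * (coeff m (qsin x⁻¹) * coeff (2 * (p + 1) - m) (qsin x)) =
      (-1) ^ (p + 1) * x ^ ((p + 1) * p) / qFact x (2 * (p + 1)) *
        (qBinom x (2 * (p + 1)) m * x ^ m.choose 2 * (-s * (x ^ p)⁻¹) ^ m) := by
  have hs_even (k : ℕ) : (-s) ^ (2 * k) = 1 := by rw [pow_mul, neg_sq, hs, one_pow]
  obtain ⟨k, rfl | rfl⟩ := Nat.even_or_odd' m
  · rw [show 2 * (p + 1) - 2 * k = 2 * (p + 1 - k) by omega, coeff_qsin_two_mul,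
      coeff_qcos_mul_coeff_qcos_inv hx (by omega) hN, mul_pow, hs_even]
    ring
  · rw [show 2 * (p + 1) - (2 * k + 1) = 2 * (p - k) + 1 by omega, coeff_qcos_two_mul_add_one,
      coeff_qsin_inv_mul_coeff_qsin hx (by omega) hN, mul_pow, pow_succ (-s), hs_even]
    ring

lemma coeff_qcos_mul_qcos_inv_add_coeff_qsin_mul_qsin_inv {x : Fq} (hx : x ≠ 0) {p : ℕ}
    (hN : qFact x (2 * (p + 1)) ≠ 0) {s : Fq} (hs : s ^ 2 = 1) :
    coeff (2 * (p + 1)) (qcos x * qcos x⁻¹) + s * coeff (2 * (p + 1)) (qsin x * qsin x⁻¹) =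
      (-1) ^ (p + 1) * x ^ ((p + 1) * p) / qFact x (2 * (p + 1)) *
        ∏ i ∈ range (2 * (p + 1)), (1 + x ^ i * (-s * (x ^ p)⁻¹)) := by
  rw [prod_one_add_pow_mul_eq_sum_qBinom, mul_comm (qsin x), coeff_mul, coeff_mul,
    Nat.sum_antidiagonal_eq_sum_range_succ_mk, Nat.sum_antidiagonal_eq_sum_range_succ_mk, mul_sum,
    mul_sum, ← sum_add_distrib]
  exact sum_congr rfl fun m hm =>
    coeff_qcos_mul_add_coeff_qsin_inv_mul hx (Nat.lt_succ_iff.1 (mem_range.1 hm)) hN hs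

lemma prod_range_one_add_pow_mul_inv_pow_mul {x : Fq} (hx : x ≠ 0) (p : ℕ) :
    (∏ i ∈ range p, (1 + x ^ i * (x ^ p)⁻¹)) * x ^ (∑ i ∈ range (p + 1), i) =
      ∏ i ∈ range p, (1 + x ^ (i + 1)) := by
  rw [sum_range_succ', add_zero, ← prod_pow_eq_pow_sum,
    ← prod_range_reflect (fun i => 1 + x ^ i * (x ^ p)⁻¹) p, ← prod_mul_distrib]
  refine prod_congr rfl fun i hi => ?_
  have hpow : x ^ (p - 1 - i) * x ^ (i + 1) = x ^ p := by
    rw [← pow_add]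
    congr 1
    have := mem_range.1 hi
    omega
  field_simp
  linear_combination hpow

lemma prod_one_add_pow_mul_inv_pow_mul {x : Fq} (hx : x ≠ 0) (p : ℕ) :
    (∏ i ∈ range (2 * (p + 1)), (1 + x ^ i * (x ^ p)⁻¹)) * x ^ (∑ i ∈ range (p + 1), i) =
      2 * (∏ i ∈ Icc 1 p, (1 + x ^ i)) ^ 2 * (1 + x ^ (p + 1)) := by
  have hupper (j : ℕ) : 1 + x ^ (p + j) * (x ^ p)⁻¹ = 1 + x ^ j := by
    rw [pow_add, mul_right_comm, mul_inv_cancel₀ (pow_ne_zero _ hx), one_mul]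
  rw [show 2 * (p + 1) = p + (p + 1 + 1) by ring, prod_range_add, prod_range_succ',
    prod_range_succ]
  simp only [hupper]
  rw [← Ico_add_one_right_eq_Icc, prod_Ico_eq_prod_range, Nat.add_sub_cancel, mul_right_comm,
    prod_range_one_add_pow_mul_inv_pow_mul hx]
  simp only [add_comm 1]
  ring

-- `RatFunc ℚ` has its own `ℚ`-algebra structure, equal to `DivisionRing.toRatAlgebra`.
lemma transcendental_qv : Transcendental ℚ qv := by
  convert RatFunc.transcendental_X (K := ℚ)
  · exact Subsingleton.elim _ _
  · rfl

theorem coeff_cos_q_mul_cos_inv_q (n : ℕ) (hn : 1 ≤ n) :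
    (PowerSeries.coeff (R := Fq) (2 * n) (qcos qv * qcos qv⁻¹) =
      (-1 : Fq) ^ n * qv ^ (n * (n - 1) / 2) / qFact qv (2 * n) *
        (∏ i ∈ Finset.Icc 1 (n - 1), (1 + qv ^ i) ^ 2) * (1 + qv ^ n)) ∧
    (PowerSeries.coeff (R := Fq) (2 * n) (qcos qv * qcos qv⁻¹) =
      - PowerSeries.coeff (R := Fq) (2 * n) (qsin qv * qsin qv⁻¹)) := by
  obtain ⟨p, rfl⟩ := Nat.exists_eq_add_of_le' hn
  have hx : qv ≠ 0 := RatFunc.X_ne_zero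
  have hN := qFact_ne_zero transcendental_qv (2 * (p + 1))
  have hvanish : ∏ i ∈ range (2 * (p + 1)), (1 + qv ^ i * (-1 * (qv ^ p)⁻¹)) = 0 :=
    prod_eq_zero (mem_range.2 (by omega : p < 2 * (p + 1))) (by field_simp; ring)
  have hadd := coeff_qcos_mul_qcos_inv_add_coeff_qsin_mul_qsin_inv hx hN (s := 1) (by norm_num)
  have hsub := coeff_qcos_mul_qcos_inv_add_coeff_qsin_mul_qsin_inv hx hN (s := -1) (by norm_num)
  have hprod := prod_one_add_pow_mul_inv_pow_mul hx p
  have htri := sum_range_id_mul_two (p + 1)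
  rw [hvanish, mul_zero, one_mul] at hadd
  rw [Nat.add_sub_cancel] at htri
  rw [neg_neg, one_mul, ← htri, pow_mul] at hsub
  rw [← sum_range_id, Nat.add_sub_cancel, prod_pow]
  refine ⟨?_, by linear_combination hadd⟩
  linear_combination (hadd + hsub) / 2 +
    (-1) ^ (p + 1) * qv ^ (∑ i ∈ range (p + 1), i) / (2 * qFact qv (2 * (p + 1))) * hprod
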